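/- For every integer n ≥ 1 and every integer k with 0 ≤ k ≤ 2^n, θ(n,k) = 2^n · m_n(k/2^n), where m_n is the n-th partial sum of the Takagi function. -/
import Mathlib


open Finset

/-- Two vertices of the hypercube `Q_n` are adjacent iff they differ in exactly one
coordinate. -/
def cubeEdge {n : ℕ} (u v : Fin n → Bool) : Prop :=
  (Finset.univ.filter (fun i => u i ≠ v i)).card = 1

instance {n : ℕ} (u v : Fin n → Bool) : Decidable (cubeEdge u v) := by
  unfold cubeEdge; infer_instance

/-- `θ(n,S)`: the number of edges of `Q_n` with exactly one endpoint in `S`. -/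
def edgeBoundary (n : ℕ) (S : Finset (Fin n → Bool)) : ℕ :=
  (Finset.univ.filter (fun p : (Fin n → Bool) × (Fin n → Bool) =>
    p.1 ∈ S ∧ p.2 ∉ S ∧ cubeEdge p.1 p.2)).card

/-- `θ(n,k) = min {θ(n,S) : S ⊆ V(Q_n), |S| = k}`. -/
noncomputable def thetaMin (n k : ℕ) : ℕ :=
  sInf {m | ∃ S : Finset (Fin n → Bool), S.card = k ∧ edgeBoundary n S = m}

/-- The half plane `{x : x_i = a}` of `Q_n`. -/
def halfPlane (n : ℕ) (i : Fin n) (a : Bool) : Finset (Fin n → Bool) :=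
  Finset.univ.filter (fun x => x i = a)

/-- `Type(S) = min_H |S ∩ H|`, minimum over the `2n` half planes of `Q_n`. -/
noncomputable def typeOf (n : ℕ) (S : Finset (Fin n → Bool)) : ℕ :=
  sInf {m | ∃ (i : Fin n) (a : Bool), (S ∩ halfPlane n i a).card = m}

/-- `θ(n,k,t) = min {θ(n,S) : |S| = k, Type(S) = t}`. -/
noncomputable def thetaMinType (n k t : ℕ) : ℕ :=
  sInf {m | ∃ S : Finset (Fin n → Bool),
    S.card = k ∧ typeOf n S = t ∧ edgeBoundary n S = m}

/-- Graph distance on the cycle `C_m` with vertices labelled by naturals. -/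
def cycleDist (m a b : ℕ) : ℕ := min (Nat.dist a b) (m - Nat.dist a b)

/-- The wirelength of an embedding `η` of `Q_n` into the cycle `C_{2^n}`:
the sum of cycle distances over all (unordered) edges of `Q_n`.  (The sum over
ordered pairs counts every edge twice, whence the division by `2`.) -/
def wirelength (n : ℕ) (η : (Fin n → Bool) → ℕ) : ℕ :=
  ((Finset.univ.filter (fun p : (Fin n → Bool) × (Fin n → Bool) =>
    cubeEdge p.1 p.2)).sum (fun p => cycleDist (2^n) (η p.1) (η p.2))) / 2

/-- The reflected Gray code embedding `ξ_n(x) = (y)_2 + 1`, where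
`y_i = (x_1 + ⋯ + x_i) mod 2`. -/
def xi (n : ℕ) (x : Fin n → Bool) : ℕ :=
  (Finset.univ.sum (fun i : Fin n =>
    ((Finset.univ.filter (fun j : Fin n => j ≤ i ∧ x j = true)).card % 2)
      * 2 ^ (n - 1 - (i : ℕ)))) + 1

/-- `f(x) = 3/4 − (64/7)(x − 1/2)²`. -/
noncomputable def fGuu (x : ℝ) : ℝ := 3/4 - 64/7 * (x - 1/2)^2

/-- `takDelta i` is `Δ_{i+1}`: `Δ_1(x) = 1/2 − |x − 1/2|`,
`Δ_{n}(x) = (1/2)Δ_{n−1}(2x − ⌊2x⌋)`. -/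
noncomputable def takDelta : ℕ → ℝ → ℝ
  | 0, x => 1/2 - |x - 1/2|
  | n+1, x => takDelta n (2*x - (⌊2*x⌋ : ℝ)) / 2

/-- `m_n(x) = Σ_{i=1}^n Δ_i(x)`, the n-th partial sum of the Takagi function. -/
noncomputable def mTakagi (n : ℕ) (x : ℝ) : ℝ := ∑ i ∈ Finset.range n, takDelta i x

/-- `y_N = ⌈2^N/24⌉ / 2^N`. -/
noncomputable def yGuu (N : ℕ) : ℝ := (⌈(2^N : ℝ)/24⌉ : ℝ) / 2^N

/-- `p_N = 1/2 − y_N`. -/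
noncomputable def pGuu (N : ℕ) : ℝ := 1/2 - yGuu N

/-- `g_{n,i,a}^{-1}(S)`, where `g_{n,i,a}` inserts the letter `a` at position `i`. -/
def gPre (n : ℕ) (i : Fin (n+1)) (a : Bool) (S : Finset (Fin (n+1) → Bool)) :
    Finset (Fin n → Bool) :=
  Finset.univ.filter (fun x => i.insertNth a x ∈ S)

def Bfn : ℕ → ℕ → ℕ
  | 0, _ => 0
  | n+1, k => if k ≤ 2^n then k + Bfn n k else (2^(n+1) - k) + Bfn n (2^(n+1) - k)

lemma Bfn_succ_le {n k : ℕ} (h : k ≤ 2^n) : Bfn (n+1) k = k + Bfn n k := by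
  simp [Bfn, h]

lemma Bfn_succ_ge {n k : ℕ} (h : ¬ k ≤ 2^n) :
    Bfn (n+1) k = (2^(n+1) - k) + Bfn n (2^(n+1) - k) := by
  simp [Bfn, h]

lemma Bfn_zero (n : ℕ) : Bfn n 0 = 0 := by
  induction n with
  | zero => rfl
  | succ n ih => simp [Bfn, ih]

lemma Bfn_symm (n : ℕ) (k : ℕ) (hk : k ≤ 2^n) : Bfn n (2^n - k) = Bfn n k := by
  cases n with
  | zero => interval_cases k <;> rfl
  | succ n =>
    have hpow : 2^(n+1) = 2 * 2^n := by ring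
    rcases lt_trichotomy k (2^n) with h | h | h
    · have h1 : ¬ (2^(n+1) - k ≤ 2^n) := by omega
      have h2 : 2^(n+1) - (2^(n+1) - k) = k := by omega
      simp [Bfn, h1, h2, h.le]
    · have h2 : 2^(n+1) - 2^n = 2^n := by omega
      rw [h, h2]
    · have h2 : 2^(n+1) - k ≤ 2^n := by omega
      have h3 : ¬ k ≤ 2^n := by omega
      simp [Bfn, h2, h3]

lemma Bfn_key (n : ℕ) :
    (∀ a b, a ≤ b → b ≤ 2^n → Bfn (n+1) (a+b) ≤ Bfn n a + Bfn n b + (b - a)) ∧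
    (∀ a c, a ≤ c → c ≤ 2^n → Bfn n (c - a) ≤ Bfn n a + Bfn n c) := by
  induction n with
  | zero =>
    constructor
    · intro a b hab hb
      simp only [pow_zero] at hb
      interval_cases b <;> interval_cases a <;> decide
    · intro a c _ _; simp [Bfn]
  | succ n ih =>
    obtain ⟨L1, L2⟩ := ih
    have hpow : 2^(n+1) = 2 * 2^n := by ring
    have hpow2 : 2^(n+2) = 2 * 2^(n+1) := by ring
    have L2' : ∀ a c, a ≤ c → c ≤ 2^(n+1) → Bfn (n+1) (c - a) ≤ Bfn (n+1) a + Bfn (n+1) c := by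
      intro a c hac hc
      rcases le_or_gt c (2^n) with h | h
      · rw [Bfn_succ_le (show c - a ≤ 2^n by omega), Bfn_succ_le (le_trans hac h),
          Bfn_succ_le h]
        have := L2 a c hac h
        omega
      · rcases le_or_gt a (2^n) with ha | ha
        · have e1 : Bfn (n+1) a = a + Bfn n a := Bfn_succ_le ha
          have e2 : Bfn (n+1) c = (2^(n+1) - c) + Bfn n (2^(n+1) - c) :=
            Bfn_succ_ge (by omega)
          rcases le_total a (2^(n+1) - c) with hle | hle
          · have h1 : 2^(n+1) - (c - a) = a + (2^(n+1) - c) := by omega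
            have e3 : Bfn (n+1) (c - a) = Bfn (n+1) (a + (2^(n+1) - c)) := by
              rw [← Bfn_symm (n+1) (c - a) (by omega), h1]
            have h4 := L1 a (2^(n+1) - c) hle (by omega)
            omega
          · have h1 : 2^(n+1) - (c - a) = (2^(n+1) - c) + a := by omega
            have e3 : Bfn (n+1) (c - a) = Bfn (n+1) ((2^(n+1) - c) + a) := by
              rw [← Bfn_symm (n+1) (c - a) (by omega), h1]
            have h4 := L1 (2^(n+1) - c) a hle ha
            omega
        · have e1 : Bfn (n+1) a = (2^(n+1) - a) + Bfn n (2^(n+1) - a) :=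
            Bfn_succ_ge (by omega)
          have e2 : Bfn (n+1) c = (2^(n+1) - c) + Bfn n (2^(n+1) - c) :=
            Bfn_succ_ge (by omega)
          have h1 : c - a = (2^(n+1) - a) - (2^(n+1) - c) := by omega
          have e3 : Bfn (n+1) (c - a) = (c - a) + Bfn n ((2^(n+1) - a) - (2^(n+1) - c)) := by
            rw [Bfn_succ_le (show c - a ≤ 2^n by omega), h1]
          have h4 := L2 (2^(n+1) - c) (2^(n+1) - a) (by omega) (by omega)
          omega
    have L1' : ∀ a b, a ≤ b → b ≤ 2^(n+1) →
        Bfn (n+2) (a+b) ≤ Bfn (n+1) a + Bfn (n+1) b + (b - a) := by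
      intro a b hab hb
      rcases le_or_gt b (2^n) with h | h
      · rw [Bfn_succ_le (show a + b ≤ 2^(n+1) by omega), Bfn_succ_le (le_trans hab h),
          Bfn_succ_le h]
        have := L1 a b hab h
        omega
      · rcases le_or_gt a (2^n) with ha | ha
        · have e1 : Bfn (n+1) a = a + Bfn n a := Bfn_succ_le ha
          have e2 : Bfn (n+1) b = (2^(n+1) - b) + Bfn n (2^(n+1) - b) :=
            Bfn_succ_ge (by omega)
          rcases le_total (2^(n+1) - b) a with hca | hca
          · -- a + b ≥ 2^(n+1)
            have h1 : 2^(n+2) - (a+b) = 2^(n+1) - (a - (2^(n+1) - b)) := by omega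
            have e3 : Bfn (n+2) (a+b)
                = (2^(n+1) - (a - (2^(n+1) - b)))
                  + ((a - (2^(n+1) - b)) + Bfn n (a - (2^(n+1) - b))) := by
              rw [← Bfn_symm (n+2) (a+b) (by omega), h1,
                Bfn_succ_le (show 2^(n+1) - (a - (2^(n+1) - b)) ≤ 2^(n+1) by omega),
                Bfn_symm (n+1) (a - (2^(n+1) - b)) (by omega),
                Bfn_succ_le (show a - (2^(n+1) - b) ≤ 2^n by omega)]
            have h4 := L2 (2^(n+1) - b) a hca ha
            omega
          · have h1 : a + b = 2^(n+1) - ((2^(n+1) - b) - a) := by omega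
            have e3 : Bfn (n+2) (a+b)
                = (a + b) + (((2^(n+1) - b) - a) + Bfn n ((2^(n+1) - b) - a)) := by
              rw [h1, Bfn_succ_le (show 2^(n+1) - ((2^(n+1) - b) - a) ≤ 2^(n+1) by omega),
                Bfn_symm (n+1) ((2^(n+1) - b) - a) (by omega),
                Bfn_succ_le (show (2^(n+1) - b) - a ≤ 2^n by omega)]
            have h4 := L2 a (2^(n+1) - b) hca (by omega)
            omega
        · have e1 : Bfn (n+1) a = (2^(n+1) - a) + Bfn n (2^(n+1) - a) :=
            Bfn_succ_ge (by omega)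
          have e2 : Bfn (n+1) b = (2^(n+1) - b) + Bfn n (2^(n+1) - b) :=
            Bfn_succ_ge (by omega)
          have h1 : 2^(n+2) - (a+b) = (2^(n+1) - b) + (2^(n+1) - a) := by omega
          have e3 : Bfn (n+2) (a+b) = Bfn (n+2) ((2^(n+1) - b) + (2^(n+1) - a)) := by
            rw [← Bfn_symm (n+2) (a+b) (by omega), h1]
          have e4 : Bfn (n+2) ((2^(n+1) - b) + (2^(n+1) - a))
              = ((2^(n+1) - b) + (2^(n+1) - a))
                + Bfn (n+1) ((2^(n+1) - b) + (2^(n+1) - a)) :=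
            Bfn_succ_le (by omega)
          have h4 := L1 (2^(n+1) - b) (2^(n+1) - a) (by omega) (by omega)
          omega
    exact ⟨L1', L2'⟩




def qslice {n : ℕ} (a : Bool) (S : Finset (Fin (n+1) → Bool)) : Finset (Fin n → Bool) :=
  Finset.univ.filter (fun x => Fin.cons a x ∈ S)

lemma mem_qslice {n : ℕ} (a : Bool) (S : Finset (Fin (n+1) → Bool)) (x : Fin n → Bool) :
    x ∈ qslice a S ↔ Fin.cons a x ∈ S := by
  simp [qslice]

lemma diff_card_eq_zero_iff {n : ℕ} (x y : Fin n → Bool) :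
    (Finset.univ.filter (fun i => x i ≠ y i)).card = 0 ↔ x = y := by
  rw [Finset.card_eq_zero, Finset.filter_eq_empty_iff]
  constructor
  · intro h; funext i; have := h (Finset.mem_univ i); simpa using this
  · intro h i _; simp [h]

lemma cubeEdge_cons {n : ℕ} (a b : Bool) (x y : Fin n → Bool) :
    cubeEdge (Fin.cons a x) (Fin.cons b y) ↔ (a = b ∧ cubeEdge x y) ∨ (a ≠ b ∧ x = y) := by
  have hcard : (Finset.univ.filter (fun i : Fin (n+1) => (Fin.cons a x : Fin (n+1) → Bool) i ≠ (Fin.cons b y : Fin (n+1) → Bool) i)).card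
      = (if a ≠ b then 1 else 0) + (Finset.univ.filter (fun i => x i ≠ y i)).card := by
    rw [Finset.card_filter, Finset.card_filter, Fin.sum_univ_succ]
    simp
  unfold cubeEdge
  rw [hcard]
  by_cases hab : a = b
  · simp [hab]
  · rw [if_pos hab]
    rw [show (1 + (Finset.univ.filter (fun i => x i ≠ y i)).card = 1) ↔
        ((Finset.univ.filter (fun i => x i ≠ y i)).card = 0) from by omega,
      diff_card_eq_zero_iff]
    simp [hab]

lemma eb_sum (n : ℕ) (S : Finset (Fin n → Bool)) :
    edgeBoundary n S = ∑ u : Fin n → Bool, ∑ v : Fin n → Bool,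
      (if u ∈ S ∧ v ∉ S ∧ cubeEdge u v then 1 else 0) := by
  rw [edgeBoundary, Finset.card_filter, Fintype.sum_prod_type]

lemma sum_fun_succ {n : ℕ} {M : Type*} [AddCommMonoid M] (f : (Fin (n+1) → Bool) → M) :
    ∑ u : Fin (n+1) → Bool, f u
      = (∑ x : Fin n → Bool, f (Fin.cons true x)) + ∑ x : Fin n → Bool, f (Fin.cons false x) := by
  rw [← Equiv.sum_comp (Fin.consEquiv (fun _ => Bool)) f, Fintype.sum_prod_type,
    Fintype.sum_bool]
  rfl

lemma g_diag {n : ℕ} (a : Bool) (S : Finset (Fin (n+1) → Bool)) :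
    (∑ x : Fin n → Bool, ∑ y : Fin n → Bool,
      if Fin.cons a x ∈ S ∧ Fin.cons a y ∉ S ∧ cubeEdge (Fin.cons a x) (Fin.cons a y)
        then 1 else 0) = edgeBoundary n (qslice a S) := by
  rw [eb_sum]
  refine Finset.sum_congr rfl (fun x _ => Finset.sum_congr rfl (fun y _ => ?_))
  refine if_congr ?_ rfl rfl
  simp [cubeEdge_cons, mem_qslice]

lemma g_off {n : ℕ} (a b : Bool) (hab : a ≠ b) (S : Finset (Fin (n+1) → Bool)) :
    (∑ x : Fin n → Bool, ∑ y : Fin n → Bool,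
      if Fin.cons a x ∈ S ∧ Fin.cons b y ∉ S ∧ cubeEdge (Fin.cons a x) (Fin.cons b y)
        then 1 else 0) = ((qslice a S) \ (qslice b S)).card := by
  have h1 : ∀ x y : Fin n → Bool,
      (Fin.cons a x ∈ S ∧ Fin.cons b y ∉ S ∧ cubeEdge (Fin.cons a x) (Fin.cons b y))
        ↔ (y = x ∧ (x ∈ qslice a S ∧ x ∉ qslice b S)) := by
    intro x y
    simp only [cubeEdge_cons, mem_qslice, hab, false_and, ne_eq, not_false_iff, true_and,
      false_or]
    constructor
    · rintro ⟨h1, h2, h3⟩; subst h3; exact ⟨rfl, h1, h2⟩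
    · rintro ⟨rfl, h1, h2⟩; exact ⟨h1, h2, rfl⟩
  have h2 : ∀ x : Fin n → Bool, (∑ y : Fin n → Bool,
      if Fin.cons a x ∈ S ∧ Fin.cons b y ∉ S ∧ cubeEdge (Fin.cons a x) (Fin.cons b y)
        then 1 else 0) = if x ∈ qslice a S ∧ x ∉ qslice b S then 1 else 0 := by
    intro x
    rw [Finset.sum_congr rfl (fun y _ => if_congr (h1 x y) rfl rfl)]
    simp [ite_and]
  rw [Finset.sum_congr rfl (fun x _ => h2 x)]
  rw [← Finset.card_filter]
  congr 1
  ext x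
  simp [Finset.mem_sdiff]

lemma eb_split (n : ℕ) (S : Finset (Fin (n+1) → Bool)) :
    edgeBoundary (n+1) S
      = edgeBoundary n (qslice false S) + edgeBoundary n (qslice true S)
        + (((qslice false S) \ (qslice true S)).card + ((qslice true S) \ (qslice false S)).card) := by
  rw [eb_sum, sum_fun_succ]
  have ht : ∀ x : Fin n → Bool, (∑ v : Fin (n+1) → Bool,
      if Fin.cons true x ∈ S ∧ v ∉ S ∧ cubeEdge (Fin.cons true x) v then 1 else 0)
      = (∑ y : Fin n → Bool,
          if Fin.cons true x ∈ S ∧ Fin.cons true y ∉ S ∧ cubeEdge (Fin.cons true x) (Fin.cons true y) then 1 else 0)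
        + ∑ y : Fin n → Bool,
          if Fin.cons true x ∈ S ∧ Fin.cons false y ∉ S ∧ cubeEdge (Fin.cons true x) (Fin.cons false y) then 1 else 0 :=
    fun x => sum_fun_succ _
  have hf : ∀ x : Fin n → Bool, (∑ v : Fin (n+1) → Bool,
      if Fin.cons false x ∈ S ∧ v ∉ S ∧ cubeEdge (Fin.cons false x) v then 1 else 0)
      = (∑ y : Fin n → Bool,
          if Fin.cons false x ∈ S ∧ Fin.cons true y ∉ S ∧ cubeEdge (Fin.cons false x) (Fin.cons true y) then 1 else 0)
        + ∑ y : Fin n → Bool,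
          if Fin.cons false x ∈ S ∧ Fin.cons false y ∉ S ∧ cubeEdge (Fin.cons false x) (Fin.cons false y) then 1 else 0 :=
    fun x => sum_fun_succ _
  rw [Finset.sum_congr rfl (fun x _ => ht x), Finset.sum_congr rfl (fun x _ => hf x),
    Finset.sum_add_distrib, Finset.sum_add_distrib,
    g_diag true S, g_diag false S, g_off true false (by decide) S, g_off false true (by decide) S]
  omega

lemma card_split {n : ℕ} (S : Finset (Fin (n+1) → Bool)) :
    S.card = (qslice false S).card + (qslice true S).card := by
  have h : S.card = ∑ u : Fin (n+1) → Bool, if u ∈ S then 1 else 0 := by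
    rw [← Finset.card_filter]
    congr 1
    simp [Finset.filter_univ_mem]
  rw [h, sum_fun_succ]
  have : ∀ a : Bool, (∑ x : Fin n → Bool, if Fin.cons a x ∈ S then 1 else 0)
      = (qslice a S).card := by
    intro a
    rw [← Finset.card_filter]
    rfl
  rw [this true, this false]
  omega

lemma cubeEdge_comm {n : ℕ} (u v : Fin n → Bool) : cubeEdge u v ↔ cubeEdge v u := by
  unfold cubeEdge
  constructor <;> intro h <;> [skip; skip] <;>
    · rw [← h]
      congr 1
      apply Finset.filter_congr
      intro i _
      simp [ne_comm]

lemma eb_compl (n : ℕ) (S : Finset (Fin n → Bool)) :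
    edgeBoundary n (Finset.univ \ S) = edgeBoundary n S := by
  rw [eb_sum, eb_sum, Finset.sum_comm]
  refine Finset.sum_congr rfl (fun u _ => Finset.sum_congr rfl (fun v _ => ?_))
  refine if_congr ?_ rfl rfl
  rw [cubeEdge_comm]
  simp only [Finset.mem_sdiff, Finset.mem_univ, true_and, not_not]
  tauto

lemma eb_empty (n : ℕ) : edgeBoundary n (∅ : Finset (Fin n → Bool)) = 0 := by
  simp [edgeBoundary, Finset.filter_eq_empty_iff]

lemma card_vertices (n : ℕ) : Fintype.card (Fin n → Bool) = 2^n := by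
  simp [Fintype.card_fun]

lemma exists_opt : ∀ n k, k ≤ 2^n →
    ∃ S : Finset (Fin n → Bool), S.card = k ∧ edgeBoundary n S = Bfn n k := by
  intro n
  induction n with
  | zero =>
    have ebz : ∀ S : Finset (Fin 0 → Bool), edgeBoundary 0 S = 0 := by
      intro S
      rw [edgeBoundary, Finset.card_eq_zero, Finset.filter_eq_empty_iff]
      rintro p _ ⟨_, _, he⟩
      unfold cubeEdge at he
      simpa using he
    intro k hk
    interval_cases k
    · exact ⟨∅, by simp, by simp [ebz, Bfn]⟩
    · refine ⟨Finset.univ, ?_, by simp [ebz, Bfn]⟩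
      rw [Finset.card_univ, card_vertices, pow_zero]
  | succ n ih =>
    have half : ∀ k ≤ 2^n,
        ∃ S : Finset (Fin (n+1) → Bool), S.card = k ∧ edgeBoundary (n+1) S = Bfn (n+1) k := by
      intro k hk
      obtain ⟨S', hc, hb⟩ := ih k hk
      refine ⟨S'.image (Fin.cons false), ?_, ?_⟩
      · rw [Finset.card_image_of_injective _ (Fin.cons_right_injective _), hc]
      · have hqf : qslice false (S'.image (Fin.cons false)) = S' := by
          ext x
          simp only [mem_qslice, Finset.mem_image]
          constructor
          · rintro ⟨y, hy, hxy⟩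
            rwa [← Fin.cons_right_injective _ hxy]
          · intro hx; exact ⟨x, hx, rfl⟩
        have hqt : qslice true (S'.image (Fin.cons false)) = ∅ := by
          ext x
          simp only [mem_qslice, Finset.mem_image, Finset.notMem_empty, iff_false, not_exists]
          rintro y ⟨hy, hxy⟩
          have := congrFun hxy 0
          simp at this
        rw [eb_split, hqf, hqt, eb_empty, Bfn_succ_le hk, hb]
        simp [hc]
        omega
    intro k hk
    rcases le_or_gt k (2^n) with h | h
    · exact half k h
    · obtain ⟨S, hc, hb⟩ := half (2^(n+1) - k) (by omega)
      refine ⟨Finset.univ \ S, ?_, ?_⟩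
      · rw [Finset.card_sdiff_of_subset (Finset.subset_univ S), Finset.card_univ, card_vertices, hc]
        omega
      · rw [eb_compl, hb, Bfn_symm (n+1) k hk]

lemma lower_bound : ∀ n (S : Finset (Fin n → Bool)), Bfn n S.card ≤ edgeBoundary n S := by
  intro n
  induction n with
  | zero => intro S; simp [Bfn]
  | succ n ih =>
    intro S
    have hA := ih (qslice false S)
    have hB := ih (qslice true S)
    have hcard := card_split S
    have hAle : (qslice false S).card ≤ 2^n := by
      have := Finset.card_le_univ (qslice false S)
      rwa [card_vertices] at this
    have hBle : (qslice true S).card ≤ 2^n := by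
      have := Finset.card_le_univ (qslice true S)
      rwa [card_vertices] at this
    have hsd1 := Finset.le_card_sdiff (qslice true S) (qslice false S)
    have hsd2 := Finset.le_card_sdiff (qslice false S) (qslice true S)
    rw [eb_split, hcard]
    rcases le_total (qslice false S).card (qslice true S).card with hle | hle
    · have := (Bfn_key n).1 (qslice false S).card (qslice true S).card hle hBle
      omega
    · have := (Bfn_key n).1 (qslice true S).card (qslice false S).card hle hAle
      have hco : (qslice true S).card + (qslice false S).card
          = (qslice false S).card + (qslice true S).card := by omega
      rw [hco] at this
      omega

lemma takDelta_zero_eval : ∀ i : ℕ, takDelta i 0 = 0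
  | 0 => by norm_num [takDelta, abs_of_nonneg]
  | i+1 => by
    rw [takDelta]
    norm_num [takDelta_zero_eval i]

lemma mTakagi_zero (n : ℕ) : mTakagi n 0 = 0 := by
  simp [mTakagi, takDelta_zero_eval]

lemma mTakagi_succ (n : ℕ) (x : ℝ) :
    mTakagi (n+1) x = takDelta 0 x + mTakagi n (2*x - (⌊2*x⌋ : ℝ)) / 2 := by
  rw [mTakagi, Finset.sum_range_succ']
  have : ∀ i, takDelta (i+1) x = takDelta i (2*x - (⌊2*x⌋ : ℝ)) / 2 := fun i => rfl
  rw [Finset.sum_congr rfl (fun i _ => this i), ← Finset.sum_div]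
  rw [mTakagi]
  ring

lemma Bfn_pow (n : ℕ) : Bfn n (2^n) = 0 := by
  have := Bfn_symm n 0 (by positivity)
  rw [Nat.sub_zero] at this
  rw [this, Bfn_zero]

lemma takDelta0_left {x : ℝ} (h0 : 0 ≤ x) (h : x ≤ 1/2) : takDelta 0 x = x := by
  rw [takDelta, abs_of_nonpos (by linarith)]
  ring

lemma takDelta0_right {x : ℝ} (h : 1/2 ≤ x) (h1 : x ≤ 1) : takDelta 0 x = 1 - x := by
  rw [takDelta, abs_of_nonneg (by linarith)]
  ring

lemma Bfn_real : ∀ n k, k ≤ 2^n → (Bfn n k : ℝ) = 2^n * mTakagi n ((k:ℝ)/2^n) := by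
  intro n
  induction n with
  | zero =>
    intro k hk
    interval_cases k <;> simp [Bfn, mTakagi]
  | succ n ih =>
    intro k hk
    have hp : (0:ℝ) < 2^n := by positivity
    have hp1 : (0:ℝ) < 2^(n+1) := by positivity
    have hps : (2:ℝ)^(n+1) = 2 * 2^n := by ring
    have h2x : 2 * ((k:ℝ)/2^(n+1)) = (k:ℝ)/2^n := by
      field_simp
      ring
    rw [mTakagi_succ, h2x]
    rcases lt_trichotomy k (2^n) with h | h | h
    · have hfl : ⌊(k:ℝ)/2^n⌋ = 0 := by
        rw [Int.floor_eq_zero_iff]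
        constructor
        · positivity
        · rw [div_lt_one hp]
          exact_mod_cast h
      have hd0 : takDelta 0 ((k:ℝ)/2^(n+1)) = (k:ℝ)/2^(n+1) := by
        apply takDelta0_left (by positivity)
        rw [div_le_iff₀ hp1]
        push_cast
        nlinarith [show (k:ℝ) ≤ 2^n from by exact_mod_cast h.le]
      rw [hfl, hd0, Bfn_succ_le h.le]
      push_cast
      rw [ih k h.le]
      push_cast
      field_simp
      ring
    · subst h
      have hx : ((2^n : ℕ):ℝ)/2^(n+1) = 1/2 := by
        push_cast
        field_simp
        ring
      have hfl : (((2^n : ℕ):ℝ)/2^n) = 1 := by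
        push_cast
        field_simp
      rw [hfl, Int.floor_one]
      have hz : (1:ℝ) - ((1:ℤ):ℝ) = 0 := by norm_num
      rw [hz, mTakagi_zero, hx, takDelta0_left (by norm_num) (by norm_num),
        Bfn_succ_le le_rfl, Bfn_pow]
      push_cast
      ring
    · have hk2 : k ≤ 2^(n+1) := hk
      rcases eq_or_lt_of_le hk2 with he | hlt
      · subst he
        have hx : ((2^(n+1) : ℕ):ℝ)/2^(n+1) = 1 := by
          push_cast
          field_simp
        have h2 : ((2^(n+1):ℕ):ℝ)/2^n = 2 := by
          push_cast
          rw [hps]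
          field_simp
        rw [hx, h2, takDelta0_right (by norm_num) le_rfl,
          show ⌊(2:ℝ)⌋ = 2 from by norm_num,
          show (2:ℝ) - ((2:ℤ):ℝ) = 0 from by norm_num, mTakagi_zero,
          Bfn_succ_ge (by omega)]
        simp [Bfn_zero]
      · -- 2^n < k < 2^(n+1)
        have hk' : 2^n ≤ k := h.le
        have hkr : (2:ℝ)^n ≤ (k:ℝ) := by exact_mod_cast h.le
        have hkr2 : (k:ℝ) ≤ 2^(n+1) := by exact_mod_cast hk2
        have hfl : ⌊(k:ℝ)/2^n⌋ = 1 := by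
          rw [Int.floor_eq_iff]
          constructor
          · rw [show ((1:ℤ):ℝ) = 1 from by norm_num, le_div_iff₀ hp]
            linarith
          · rw [div_lt_iff₀ hp]
            push_cast
            nlinarith [show (k:ℝ) < 2^(n+1) from by exact_mod_cast hlt]
        have e1 : Bfn (n+1) k = (2^(n+1) - k) + Bfn n (2^(n+1) - k) := Bfn_succ_ge (by omega)
        have e2 : (2:ℕ)^n - (k - 2^n) = 2^(n+1) - k := by omega
        have e3 : Bfn n (2^(n+1) - k) = Bfn n (k - 2^n) := by
          rw [← e2, Bfn_symm n (k - 2^n) (by omega)]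
        have hfrac : (k:ℝ)/2^n - ((1:ℤ):ℝ) = ((k - 2^n : ℕ):ℝ)/2^n := by
          rw [Nat.cast_sub hk']
          push_cast
          field_simp
        have hd0 : takDelta 0 ((k:ℝ)/2^(n+1)) = 1 - (k:ℝ)/2^(n+1) := by
          apply takDelta0_right
          · rw [le_div_iff₀ hp1]
            nlinarith
          · rw [div_le_one hp1]
            exact hkr2
        rw [hfl, hfrac, hd0, e1, e3, Nat.cast_add, Nat.cast_sub hk2,
          ih (k - 2^n) (by omega), Nat.cast_sub hk']
        push_cast
        field_simp
        ring

lemma thetaMin_eq (n k : ℕ) (hk : k ≤ 2^n) : thetaMin n k = Bfn n k := by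
  obtain ⟨S, hc, hb⟩ := exists_opt n k hk
  have hne : {m | ∃ S : Finset (Fin n → Bool), S.card = k ∧ edgeBoundary n S = m}.Nonempty :=
    ⟨Bfn n k, S, hc, hb⟩
  apply le_antisymm
  · exact Nat.sInf_le ⟨S, hc, hb⟩
  · obtain ⟨T, hTc, hTb⟩ := Nat.sInf_mem hne
    have hlow := lower_bound n T
    rw [hTc] at hlow
    rw [thetaMin, ← hTb]
    exact hlow


/-- For `0 ≤ k ≤ 2^n`, `θ(n,k) = 2^n · m_n(k/2^n)`. -/
theorem theta_eq_takagi_partial_sum (n k : ℕ) (hn : 1 ≤ n) (hk : k ≤ 2^n) :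
    (thetaMin n k : ℝ) = 2^n * mTakagi n ((k:ℝ)/2^n) := by
  rw [thetaMin_eq n k hk, Bfn_real n k hk]
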